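/- Suppose for a random confidence set Ĉ(·) (depending on auxiliary data D) and test point (X̃, Ỹ) ∼ Q̃ ⊗ P_{Y|X} it holds that P(Ỹ ∈ Ĉ(X̃) | D) ≥ 1 − α almost surely, and let (X, Y) ∼ Q ⊗ P_{Y|X} be independent of D with Q ≪ P and w = dQ/dP, where Q̃ has density ŵ with respect to P and ∫ŵ dP = 1. Then P(Y ∈ Ĉ(X)) ≥ 1 − α − (1/2)·E_{X∼P}|ŵ(X) − w(X)|. -/

import Mathlib

open MeasureTheory ProbabilityTheory
open scoped ENNReal

/-- If the confidence set `C d` (depending on auxiliary data `d ∼ ρ`) satisfies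
`P(Ỹ ∈ C(X̃) | D) ≥ 1 − α` a.s. for `(X̃,Ỹ) ∼ Q̃ ⊗ κ` with `dQ̃ = ŵ dP`, and
`(X,Y) ∼ Q ⊗ κ` with `Q ≪ P`, `w = dQ/dP`, then
`P(Y ∈ C(X)) ≥ 1 − α − (1/2) E_{X∼P}|ŵ(X) − w(X)|`. -/
theorem stmt12 {𝒳 𝒴 D : Type*} [MeasurableSpace 𝒳] [MeasurableSpace 𝒴] [MeasurableSpace D]
    (P Q : Measure 𝒳) [IsProbabilityMeasure P] [IsProbabilityMeasure Q]
    (κ : Kernel 𝒳 𝒴) [IsMarkovKernel κ]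
    (ρ : Measure D) [IsProbabilityMeasure ρ]
    (wh : 𝒳 → ℝ≥0∞) (hwh : Measurable wh) (hwh1 : ∫⁻ x, wh x ∂P = 1)
    (hQP : Q ≪ P)
    (α : ℝ) (hα : α ∈ Set.Ioo (0 : ℝ) 1)
    (C : D → 𝒳 → Set 𝒴)
    (hCmeas : ∀ d, MeasurableSet {p : 𝒳 × 𝒴 | p.2 ∈ C d p.1})
    (hcover : ∀ᵐ d ∂ρ,
      ENNReal.ofReal (1 - α) ≤ ((P.withDensity wh) ⊗ₘ κ) {p : 𝒳 × 𝒴 | p.2 ∈ C d p.1}) :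
    ENNReal.ofReal (1 - α) -
        (∫⁻ x, (wh x - Q.rnDeriv P x) ⊔ (Q.rnDeriv P x - wh x) ∂P) / 2 ≤
      ∫⁻ d, (Q ⊗ₘ κ) {p : 𝒳 × 𝒴 | p.2 ∈ C d p.1} ∂ρ := by
  set w := Q.rnDeriv P with hwdef
  have hwmeas : Measurable w := Measure.measurable_rnDeriv Q P
  have hw1 : ∫⁻ x, w x ∂P = 1 := by
    rw [hwdef, Measure.lintegral_rnDeriv hQP]; simp
  set M := ∫⁻ x, wh x ⊓ w x ∂P with hMdef
  have hMne : M ≠ ∞ := by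
    refine ne_top_of_le_ne_top (by simp : (1:ℝ≥0∞) ≠ ∞) ?_
    calc M ≤ ∫⁻ x, wh x ∂P := lintegral_mono fun x => inf_le_left
    _ = 1 := hwh1
  set A := ∫⁻ x, wh x - w x ∂P with hAdef
  have hA : A = 1 - M := by
    have h : ∫⁻ x, (wh x - w x) + (wh x ⊓ w x) ∂P = 1 := by
      rw [← hwh1]
      congr 1; funext x; exact tsub_add_min
    rw [lintegral_add_right _ (show Measurable fun x => wh x ⊓ w x from hwh.inf hwmeas)] at h
    exact ENNReal.eq_sub_of_add_eq hMne h
  have hB : ∫⁻ x, w x - wh x ∂P = 1 - M := by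
    have h : ∫⁻ x, (w x - wh x) + (wh x ⊓ w x) ∂P = 1 := by
      rw [← hw1]
      congr 1; funext x; rw [inf_comm]; exact tsub_add_min
    rw [lintegral_add_right _ (show Measurable fun x => wh x ⊓ w x from hwh.inf hwmeas)] at h
    exact ENNReal.eq_sub_of_add_eq hMne h
  have hAne : A ≠ ∞ := by rw [hA]; exact (tsub_le_self.trans_lt (by simp)).ne
  have hT : (∫⁻ x, (wh x - w x) ⊔ (w x - wh x) ∂P) / 2 = A := by
    have hsum : ∫⁻ x, (wh x - w x) ⊔ (w x - wh x) ∂P = A + (∫⁻ x, w x - wh x ∂P) := by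
      rw [hAdef, ← lintegral_add_right _ (show Measurable fun x => w x - wh x from hwmeas.sub hwh)]
      congr 1; funext x
      rcases le_total (wh x) (w x) with h | h
      · simp [tsub_eq_zero_of_le h]
      · simp [tsub_eq_zero_of_le h]
    rw [hsum, hB, ← hA, ← two_mul, mul_comm, mul_div_assoc, ENNReal.div_self two_ne_zero (by norm_num), mul_one]
  rw [hT]
  -- pointwise bound for each d
  have hpt : ∀ᵐ d ∂ρ, ENNReal.ofReal (1 - α) - A ≤
      (Q ⊗ₘ κ) {p : 𝒳 × 𝒴 | p.2 ∈ C d p.1} := by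
    filter_upwards [hcover] with d hd
    have hfmeas : Measurable fun x => κ x (Prod.mk x ⁻¹' {p : 𝒳 × 𝒴 | p.2 ∈ C d p.1}) :=
      Kernel.measurable_kernel_prodMk_left (hCmeas d)
    have hQeq : (Q ⊗ₘ κ) {p : 𝒳 × 𝒴 | p.2 ∈ C d p.1}
        = ∫⁻ x, w x * κ x (Prod.mk x ⁻¹' {p : 𝒳 × 𝒴 | p.2 ∈ C d p.1}) ∂P := by
      conv_lhs => rw [← Measure.withDensity_rnDeriv_eq Q P hQP]
      rw [Measure.compProd_apply (hCmeas d),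
        lintegral_withDensity_eq_lintegral_mul _ hwmeas hfmeas]
      rfl
    have hQteq : ((P.withDensity wh) ⊗ₘ κ) {p : 𝒳 × 𝒴 | p.2 ∈ C d p.1}
        = ∫⁻ x, wh x * κ x (Prod.mk x ⁻¹' {p : 𝒳 × 𝒴 | p.2 ∈ C d p.1}) ∂P := by
      rw [Measure.compProd_apply (hCmeas d),
        lintegral_withDensity_eq_lintegral_mul _ hwh hfmeas]
      rfl
    rw [hQeq]
    rw [tsub_le_iff_right]
    calc ENNReal.ofReal (1 - α)
        ≤ ∫⁻ x, wh x * κ x (Prod.mk x ⁻¹' {p : 𝒳 × 𝒴 | p.2 ∈ C d p.1}) ∂P := by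
          rw [← hQteq]; exact hd
      _ ≤ ∫⁻ x, w x * κ x (Prod.mk x ⁻¹' {p : 𝒳 × 𝒴 | p.2 ∈ C d p.1}) + (wh x - w x) ∂P := by
          refine lintegral_mono fun x => ?_
          calc wh x * κ x (Prod.mk x ⁻¹' {p : 𝒳 × 𝒴 | p.2 ∈ C d p.1})
              ≤ (w x + (wh x - w x)) * κ x (Prod.mk x ⁻¹' {p : 𝒳 × 𝒴 | p.2 ∈ C d p.1}) :=
                mul_le_mul_left le_add_tsub _
            _ = w x * κ x (Prod.mk x ⁻¹' {p : 𝒳 × 𝒴 | p.2 ∈ C d p.1})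
                + (wh x - w x) * κ x (Prod.mk x ⁻¹' {p : 𝒳 × 𝒴 | p.2 ∈ C d p.1}) := by
                ring
            _ ≤ _ := by
                gcongr
                exact (mul_le_mul_right prob_le_one _).trans (by simp)
      _ = (∫⁻ x, w x * κ x (Prod.mk x ⁻¹' {p : 𝒳 × 𝒴 | p.2 ∈ C d p.1}) ∂P) + A := by
          rw [hAdef, lintegral_add_right _ (show Measurable fun x => wh x - w x from hwh.sub hwmeas)]
  calc ENNReal.ofReal (1 - α) - A
      = ∫⁻ _, ENNReal.ofReal (1 - α) - A ∂ρ := by simp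
    _ ≤ _ := lintegral_mono_ae hpt
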